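/- arXiv:math-ph/9805002 — 2 statements merged into one kernel-verified Lean document; each statement's English description precedes it below -/
import Mathlib

section
/- Let v, u, w be the vector fields on R^3 given by v = (yz-xy-xz)∂_x + (xz-xy-yz)∂_y + (xy-xz-yz)∂_z, u = 2(x∂_x + y∂_y + z∂_z), and w = ∂_x + ∂_y + ∂_z. Then their Lie brackets satisfy [v,u] = -2v, [w,u] = 2w, and [v,w] = u, so they span a Lie algebra isomorphic to sl(2,R). -/
/- STATEMENT 0: the Darboux–Halphen vector field v, the radial field u and the
constant field w on ℝ³ satisfy the sl(2,ℝ) bracket relations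
[v,u] = -2v, [w,u] = 2w, [v,w] = u, where [X,Y] = (DY)X - (DX)Y. -/

noncomputable section

abbrev E3 : Type := Fin 3 → ℝ

/-- Lie bracket of vector fields on ℝ³, `[X,Y] = (DY)X - (DX)Y`. -/
def lie3 (X Y : E3 → E3) : E3 → E3 :=
  fun p => fderiv ℝ Y p (X p) - fderiv ℝ X p (Y p)

/-- The Darboux–Halphen vector field. -/
def vDH : E3 → E3 := fun p =>
  ![p 1 * p 2 - p 0 * p 1 - p 0 * p 2,
    p 0 * p 2 - p 0 * p 1 - p 1 * p 2,
    p 0 * p 1 - p 0 * p 2 - p 1 * p 2]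

/-- The radial vector field `u = 2(x∂_x + y∂_y + z∂_z)`. -/
def uR : E3 → E3 := fun p i => 2 * p i

/-- The translation vector field `w = ∂_x + ∂_y + ∂_z`. -/
def wT : E3 → E3 := fun _ _ => 1

def pr (i : Fin 3) : E3 →L[ℝ] ℝ := ContinuousLinearMap.proj i

lemma hasF_v (p : E3) : HasFDerivAt vDH
    (ContinuousLinearMap.pi
      ![(p 1 • pr 2 + p 2 • pr 1) - (p 0 • pr 1 + p 1 • pr 0) - (p 0 • pr 2 + p 2 • pr 0),
        (p 0 • pr 2 + p 2 • pr 0) - (p 0 • pr 1 + p 1 • pr 0) - (p 1 • pr 2 + p 2 • pr 1),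
        (p 0 • pr 1 + p 1 • pr 0) - (p 0 • pr 2 + p 2 • pr 0) - (p 1 • pr 2 + p 2 • pr 1)]) p := by
  rw [hasFDerivAt_pi']
  intro i
  have h : ∀ j : Fin 3, HasFDerivAt (fun q : E3 => q j) (pr j) p := fun j => (pr j).hasFDerivAt
  fin_cases i <;> simp only [vDH, Matrix.cons_val_zero, Matrix.cons_val_one, Matrix.head_cons,
    Matrix.cons_val_two, Matrix.tail_cons, Fin.isValue] <;>
    exact (((h _).mul (h _)).sub ((h _).mul (h _))).sub ((h _).mul (h _))

lemma fderiv_v (p q : E3) : fderiv ℝ vDH p q =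
    ![q 1 * p 2 + p 1 * q 2 - (q 0 * p 1 + p 0 * q 1) - (q 0 * p 2 + p 0 * q 2),
      q 0 * p 2 + p 0 * q 2 - (q 0 * p 1 + p 0 * q 1) - (q 1 * p 2 + p 1 * q 2),
      q 0 * p 1 + p 0 * q 1 - (q 0 * p 2 + p 0 * q 2) - (q 1 * p 2 + p 1 * q 2)] := by
  rw [(hasF_v p).fderiv]
  funext i
  fin_cases i <;> simp [pr] <;> ring

lemma uR_eq : uR = fun p : E3 => (2 : ℝ) • p := by
  funext p i; simp [uR]

lemma fderiv_u (p q : E3) : fderiv ℝ uR p q = (2 : ℝ) • q := by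
  rw [uR_eq]
  have h : HasFDerivAt (fun p : E3 => (2:ℝ) • p) ((2:ℝ) • ContinuousLinearMap.id ℝ E3) p :=
    ((2:ℝ) • ContinuousLinearMap.id ℝ E3).hasFDerivAt
  rw [h.fderiv]; simp

lemma fderiv_w (p : E3) : fderiv ℝ wT p = 0 := by
  have : wT = fun _ : E3 => (fun _ : Fin 3 => (1:ℝ)) := rfl
  rw [this, fderiv_fun_const]; rfl

theorem darboux_halphen_sl2_relations :
    lie3 vDH uR = (fun p => (-2 : ℝ) • vDH p) ∧
    lie3 wT uR = (fun p => (2 : ℝ) • wT p) ∧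
    lie3 vDH wT = uR := by
  refine ⟨?_, ?_, ?_⟩ <;> funext p i <;>
    simp only [lie3, Pi.sub_apply, fderiv_u, fderiv_w, fderiv_v, ContinuousLinearMap.zero_apply,
      Pi.zero_apply, Pi.smul_apply, smul_eq_mul, uR, wT, vDH] <;>
    fin_cases i <;> simp <;> ring


end
end

section
/- Let v, u, w be vector fields on a manifold M satisfying the sl(2,R) relations [v,u] = −2v, [w,u] = 2w, [v,w] = u, and let these act on functions as derivations. Define the bracket {f,g} = (w∧v)(df∧dg) + f·u(g) − g·u(f) = w(f)v(g) − v(f)w(g) + f·u(g) − g·u(f) on C^∞(M). Then this bracket is antisymmetric and satisfies the Jacobi identity {f,{g,h}} + {h,{f,g}} + {g,{h,f}} = 0, i.e., (E,B) = (w∧v, u) defines a Jacobi structure on M. -/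
/-! Expanding the double brackets with the Leibniz rule, every second derivative appears
only inside a commutator of two of the fields. The Jacobiator is therefore a cyclic sum of
terms, each linear in one of the defects `⁅v, u⁆ + 2v`, `⁅w, u⁆ - 2w`, `⁅v, w⁆ - u` of the
`sl(2, ℝ)` relations, and vanishes when they hold. -/

/- `C^∞(M)` is modelled as a commutative `ℝ`-algebra `A`, vector fields as derivations of `A`. -/

/-- The Jacobi bracket associated to the pair (E,B) = (w∧v, u). -/
def jacobiBr {A : Type*} [CommRing A] [Algebra ℝ A]
    (v u w : Derivation ℝ A A) (f g : A) : A :=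
  w f * v g - v f * w g + f * u g - g * u f

section

variable {A : Type*} [CommRing A] [Algebra ℝ A] (v u w : Derivation ℝ A A)

theorem jacobiBr_antisymm (f g : A) : jacobiBr v u w f g = -jacobiBr v u w g f := by
  simp only [jacobiBr]
  ring

def jacobiDefect (f g h : A) : A :=
  (⁅v, w⁆ - u) f * (v g * w h - v h * w g)
    - (⁅v, u⁆ + (2 : ℝ) • v) f * (g * w h - h * w g)
    + (⁅w, u⁆ - (2 : ℝ) • w) f * (g * v h - h * v g)

theorem jacobiBr_jacobiator_eq_sum_jacobiDefect (f g h : A) :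
    jacobiBr v u w f (jacobiBr v u w g h) + jacobiBr v u w h (jacobiBr v u w f g)
        + jacobiBr v u w g (jacobiBr v u w h f)
      = jacobiDefect v u w f g h + jacobiDefect v u w g h f + jacobiDefect v u w h f g := by
  simp only [jacobiBr, jacobiDefect, map_add, map_sub, Derivation.leibniz, smul_eq_mul,
    Derivation.add_apply, Derivation.sub_apply, Derivation.commutator_apply, two_smul]
  ring

theorem jacobiDefect_eq_zero (hvu : ⁅v, u⁆ = -((2 : ℝ) • v)) (hwu : ⁅w, u⁆ = (2 : ℝ) • w)
    (hvw : ⁅v, w⁆ = u) (f g h : A) : jacobiDefect v u w f g h = 0 := by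
  simp [jacobiDefect, hvu, hwu, hvw]

end

theorem sl2_jacobi_structure
    {A : Type*} [CommRing A] [Algebra ℝ A]
    (v u w : Derivation ℝ A A)
    (hvu : ⁅v, u⁆ = -((2 : ℝ) • v))
    (hwu : ⁅w, u⁆ = (2 : ℝ) • w)
    (hvw : ⁅v, w⁆ = u) :
    (∀ f g : A, jacobiBr v u w f g = -jacobiBr v u w g f) ∧
    (∀ f g h : A,
      jacobiBr v u w f (jacobiBr v u w g h)
        + jacobiBr v u w h (jacobiBr v u w f g)
        + jacobiBr v u w g (jacobiBr v u w h f) = 0) := by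
  refine ⟨jacobiBr_antisymm v u w, fun f g h => ?_⟩
  simp only [jacobiBr_jacobiator_eq_sum_jacobiDefect,
    jacobiDefect_eq_zero v u w hvu hwu hvw, add_zero]
end
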